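/- Let q ≥ 2. The finitely presented abelian group with generators a₀, a₁, a₂ and relations aᵢ = q²·a_{i+1} and aᵢ = q²·a_{i-1} (indices mod 3) is isomorphic to ℤ/(q²−1)ℤ. -/

import Mathlib

/-!
Summing the coordinates modulo `m - 1` kills every relator `eᵢ - m eⱼ`, because `m ≡ 1`. Conversely,
in the quotient `eᵢ = m e_{i+2}` and `e_{i+1} = m e_{i+2}` give `eᵢ = e_{i+1}`, so every generator
equals `e₀`, the class of `v` is `(∑ vᵢ) e₀`, and `e₀ = m e₁ = m e₀` shows that `e₀` has order
dividing `m - 1`. Here `m = q²`.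
-/

open QuotientAddGroup

namespace CyclicPresentation

def relators (m : ℤ) : Set (Fin 3 → ℤ) :=
  {v | ∃ i : Fin 3,
    v = Pi.single i 1 - m • Pi.single (i + 1) 1 ∨ v = Pi.single i 1 - m • Pi.single (i + 2) 1}

abbrev Presented (m : ℤ) : Type := (Fin 3 → ℤ) ⧸ AddSubgroup.closure (relators m)

variable {m : ℤ}

def gen (m : ℤ) (i : Fin 3) : Presented m := mk (Pi.single i 1)

lemma gen_eq_smul_gen_add_one (i : Fin 3) : gen m i = m • gen m (i + 1) := by
  rw [gen, gen, ← mk_zsmul, eq_iff_sub_mem]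
  exact AddSubgroup.subset_closure ⟨i, .inl rfl⟩

lemma gen_eq_smul_gen_add_two (i : Fin 3) : gen m i = m • gen m (i + 2) := by
  rw [gen, gen, ← mk_zsmul, eq_iff_sub_mem]
  exact AddSubgroup.subset_closure ⟨i, .inr rfl⟩

lemma gen_add_one (i : Fin 3) : gen m (i + 1) = gen m i := by
  rw [gen_eq_smul_gen_add_two i, gen_eq_smul_gen_add_one (i + 1), add_assoc]
  rfl

lemma gen_eq_gen_zero (i : Fin 3) : gen m i = gen m 0 := by
  have h1 : gen m 1 = gen m 0 := gen_add_one 0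
  have h2 : gen m 2 = gen m 1 := gen_add_one 1
  fin_cases i
  exacts [rfl, h1, h2.trans h1]

lemma sub_one_smul_gen_zero : (m - 1) • gen m 0 = 0 := by
  rw [sub_smul, one_smul, sub_eq_zero, eq_comm]
  conv_lhs => rw [gen_eq_smul_gen_add_one, gen_add_one]

lemma mk_eq_sum_smul_gen_zero (v : Fin 3 → ℤ) : (mk v : Presented m) = (∑ i, v i) • gen m 0 := by
  calc (mk v : Presented m) = ∑ i, mk (Pi.single i (v i)) := by
        conv_lhs => rw [← Finset.univ_sum_single v]
        exact map_sum (mk' _) _ _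
    _ = ∑ i, v i • gen m i := by
        simp only [gen, ← mk_zsmul, ← Pi.single_smul', smul_eq_mul, mul_one]
    _ = (∑ i, v i) • gen m 0 := by simp only [gen_eq_gen_zero, ← Finset.sum_smul]

lemma intCast_self_eq_one (m : ℤ) : (m : ZMod (m - 1).natAbs) = 1 := by
  have h : ((m - 1 : ℤ) : ZMod (m - 1).natAbs) = 0 :=
    (ZMod.intCast_zmod_eq_zero_iff_dvd _ _).2 (Int.natAbs_dvd.2 dvd_rfl)
  rwa [Int.cast_sub, Int.cast_one, sub_eq_zero] at h

def coordSum (m : ℤ) : (Fin 3 → ℤ) →+ ZMod (m - 1).natAbs where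
  toFun v := ((∑ i, v i : ℤ) : ZMod (m - 1).natAbs)
  map_zero' := by simp
  map_add' v w := by simp [Finset.sum_add_distrib]

lemma coordSum_single (i : Fin 3) : coordSum m (Pi.single i 1) = 1 := by
  simp [coordSum, Pi.single_apply]

lemma relators_le_ker : AddSubgroup.closure (relators m) ≤ (coordSum m).ker := by
  rw [AddSubgroup.closure_le]
  rintro v ⟨i, rfl | rfl⟩ <;>
    rw [SetLike.mem_coe, AddMonoidHom.mem_ker, map_sub, map_zsmul, coordSum_single,
      coordSum_single, Int.smul_one_eq_cast, intCast_self_eq_one, sub_self]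

def toZMod (m : ℤ) : Presented m →+ ZMod (m - 1).natAbs :=
  lift _ (coordSum m) relators_le_ker

lemma toZMod_gen (i : Fin 3) : toZMod m (gen m i) = 1 := coordSum_single i

lemma toZMod_bijective : Function.Bijective (toZMod m) := by
  constructor
  · rw [injective_iff_map_eq_zero]
    intro x hx
    induction x using QuotientAddGroup.induction_on with | H v =>
    obtain ⟨k, hk⟩ : m - 1 ∣ ∑ i, v i :=
      Int.natAbs_dvd.1 ((ZMod.intCast_zmod_eq_zero_iff_dvd _ _).1 hx)
    rw [mk_eq_sum_smul_gen_zero, hk, mul_comm, mul_smul, sub_one_smul_gen_zero, smul_zero]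
  · intro z
    obtain ⟨k, rfl⟩ := ZMod.intCast_surjective z
    exact ⟨k • gen m 0, by simp [toZMod_gen]⟩

noncomputable def equivZMod (m : ℤ) : Presented m ≃+ ZMod (m - 1).natAbs :=
  AddEquiv.ofBijective (toZMod m) toZMod_bijective

end CyclicPresentation

/-- The finitely presented abelian group with generators `a₀, a₁, a₂` and relations
`aᵢ = q² a_{i+1}` and `aᵢ = q² a_{i+2}` (indices mod 3) is isomorphic to `ℤ/(q²−1)ℤ`. -/
theorem stmt0 (q : ℕ) (hq : 2 ≤ q) :
    Nonempty (((Fin 3 → ℤ) ⧸ AddSubgroup.closure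
      {v : Fin 3 → ℤ | ∃ i : Fin 3,
        v = Pi.single i 1 - (q : ℤ) ^ 2 • Pi.single (i + 1) 1 ∨
        v = Pi.single i 1 - (q : ℤ) ^ 2 • Pi.single (i + 2) 1}) ≃+ ZMod (q ^ 2 - 1)) := by
  have h : ((q : ℤ) ^ 2 - 1).natAbs = q ^ 2 - 1 := by
    have := Nat.one_le_pow 2 q (by omega)
    zify [this]
    exact abs_of_nonneg (by nlinarith)
  exact ⟨h ▸ CyclicPresentation.equivZMod ((q : ℤ) ^ 2)⟩
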